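/- arXiv:1809.05749 — 6 statements merged into one kernel-verified Lean document; each statement's English description precedes it below -/
import Mathlib

section
/- Let (B_n)_{n=1}^∞ be a sequence of pairwise disjoint subsets of ℕ and (A_n)_{n=1}^∞ a sequence of pairwise disjoint infinite subsets of ℕ. Then there exists a strictly increasing map φ: ℕ → ℕ such that φ(B_n) ⊆ A_n for every n ∈ ℕ. -/
/-- Given a sequence of pairwise disjoint subsets `B n` of `ℕ` and a sequence of
pairwise disjoint infinite subsets `A n` of `ℕ`, there is a strictly increasing map
`φ : ℕ → ℕ` such that `φ (B n) ⊆ A n` for every `n`. -/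
theorem exists_strictMono_image_subset
    (B A : ℕ → Set ℕ)
    (hB : ∀ m n, m ≠ n → Disjoint (B m) (B n))
    (hA : ∀ m n, m ≠ n → Disjoint (A m) (A n))
    (hAinf : ∀ n, (A n).Infinite) :
    ∃ φ : ℕ → ℕ, StrictMono φ ∧ ∀ n, φ '' (B n) ⊆ A n := by
  classical
  set T : ℕ → Set ℕ := fun k => if h : ∃ n, k ∈ B n then A h.choose else A 0 with hT
  have hTinf : ∀ k, (T k).Infinite := by
    intro k
    simp only [hT]
    split <;> exact hAinf _
  choose f hf hflt using fun k (a : ℕ) => (hTinf k).exists_gt a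
  let φ : ℕ → ℕ := fun k => Nat.rec (f 0 0) (fun k ih => f (k + 1) ih) k
  have hmem : ∀ k, φ k ∈ T k := by
    intro k
    cases k with
    | zero => exact hf 0 0
    | succ k => exact hf (k + 1) (φ k)
  have hmono : StrictMono φ := by
    apply strictMono_nat_of_lt_succ
    intro k
    exact hflt (k + 1) (φ k)
  refine ⟨φ, hmono, ?_⟩
  rintro n x ⟨k, hk, rfl⟩
  have hex : ∃ n, k ∈ B n := ⟨n, hk⟩
  have hTk : T k = A hex.choose := by simp only [hT]; rw [dif_pos hex]
  have hφ : φ k ∈ A hex.choose := hTk ▸ hmem k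
  by_cases h : hex.choose = n
  · exact h ▸ hφ
  · exact absurd (Set.mem_inter hex.choose_spec hk)
      (Set.disjoint_iff_inter_eq_empty.mp (hB _ _ h) ▸ Set.notMem_empty k)
end

section
/- Let (x_j)_{j=1}^∞ be a 1-subsymmetric basis of a Banach space X such that there is a constant c > 0 with ‖∑_{j=1}^n x_j‖ ≥ c·n for all n. Then (x_j) is equivalent to the unit vector basis of ℓ₁, i.e., there is a constant D such that ∑_j |a_j| ≤ D·‖∑_j a_j x_j‖ for every finitely supported scalar sequence (a_j). -/
/-!
For nonnegative coefficients `b` supported in `[0, m)`, add up the `N` shifts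
`∑ j, b j • x (j + i)`, `i < N`, of `v = ∑ j, b j • x j`. By spreading the sum has norm at
most `N ‖v‖`. Its coefficients are nonnegative and equal to `∑ j, b j` on `[m, N)`, where all
shifted supports overlap; since 1-unconditionality makes the norm monotone in the moduli of the
coefficients, its norm is at least `(∑ j, b j) ‖∑_{m ≤ t < N} x t‖ ≥ c (N - m) ∑ j, b j`.
Letting `N → ∞` gives `c ∑ j, b j ≤ ‖v‖`, and unconditionality reduces arbitrary coefficients
to `|a j|`.
-/

open Finset

def shiftSumCoeff (b : ℕ → ℝ) (s : Finset ℕ) (N t : ℕ) : ℝ :=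
  ∑ i ∈ range N, ∑ j ∈ s, if j + i = t then b j else 0

theorem sum_range_sum_smul_shift {M : Type*} [AddCommMonoid M] [Module ℝ M] (x : ℕ → M)
    (b : ℕ → ℝ) {s : Finset ℕ} {m : ℕ} (hs : s ⊆ range m) (N : ℕ) :
    ∑ i ∈ range N, ∑ j ∈ s, b j • x (j + i) =
      ∑ t ∈ range (N + m), shiftSumCoeff b s N t • x t := by
  simp only [shiftSumCoeff, sum_smul, ite_smul, zero_smul]
  symm
  rw [sum_comm]
  refine sum_congr rfl fun i hi => ?_
  rw [sum_comm]
  refine sum_congr rfl fun j hj => ?_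
  have := mem_range.1 (hs hj); have := mem_range.1 hi
  rw [sum_ite_eq, if_pos (mem_range.2 (by omega))]

theorem shiftSumCoeff_nonneg {b : ℕ → ℝ} (hb : ∀ j, 0 ≤ b j) (s : Finset ℕ) (N t : ℕ) :
    0 ≤ shiftSumCoeff b s N t :=
  sum_nonneg fun _ _ => sum_nonneg fun j _ => by split_ifs <;> simp [hb j]

theorem shiftSumCoeff_of_mem_Ico (b : ℕ → ℝ) {s : Finset ℕ} {m N t : ℕ} (hs : s ⊆ range m)
    (ht : t ∈ Ico m N) : shiftSumCoeff b s N t = ∑ j ∈ s, b j := by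
  rw [shiftSumCoeff, sum_comm]
  refine sum_congr rfl fun j hj => ?_
  have := mem_range.1 (hs hj); have := mem_Ico.1 ht
  rw [sum_congr rfl fun i _ => if_congr (show j + i = t ↔ t - j = i by omega) rfl rfl,
    sum_ite_eq, if_pos (mem_range.2 (by omega))]

theorem le_of_forall_nat_mul_le_add_mul {a b m : ℝ} (h : ∀ K : ℕ, K * a ≤ (K + m) * b) :
    a ≤ b := by
  by_contra! hba
  obtain ⟨K, hK⟩ := exists_nat_gt (m * b / (a - b))
  have := h K
  rw [div_lt_iff₀ (sub_pos.2 hba)] at hK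
  nlinarith

section

variable {X : Type*} [NormedAddCommGroup X] [NormedSpace ℝ X] {x : ℕ → X}

def IsOneUnconditional (x : ℕ → X) : Prop :=
  ∀ (ε : ℕ → ℝ), (∀ j, |ε j| = 1) →
    ∀ (a : ℕ → ℝ) (s : Finset ℕ), ‖∑ j ∈ s, (ε j * a j) • x j‖ = ‖∑ j ∈ s, a j • x j‖

namespace IsOneUnconditional

theorem norm_sum_update_le (hx : IsOneUnconditional x) (a : ℕ → ℝ) (s : Finset ℕ) {j₀ : ℕ}
    {w : ℝ} (hw : |w| ≤ |a j₀|) :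
    ‖∑ j ∈ s, Function.update a j₀ w j • x j‖ ≤ ‖∑ j ∈ s, a j • x j‖ := by
  obtain ⟨θ, hθ, hθw⟩ : ∃ θ : ℝ, |θ| ≤ 1 ∧ θ * a j₀ = w := by
    refine ⟨w / a j₀, ?_, ?_⟩
    · rw [abs_div]
      exact div_le_one_of_le₀ hw (abs_nonneg (a j₀))
    · rcases eq_or_ne (a j₀) 0 with h0 | h0
      · simp_all
      · exact div_mul_cancel₀ w h0
  obtain ⟨hθ₁, hθ₂⟩ := abs_le.1 hθ
  let ε : ℕ → ℝ := Function.update 1 j₀ (-1)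
  have hε : ∀ j, |ε j| = 1 := fun j => by
    rcases eq_or_ne j j₀ with rfl | h <;> simp [ε, *]
  -- The updated vector is a convex combination of `∑ a j • x j` and its sign flip at `j₀`.
  have hconv : ∑ j ∈ s, Function.update a j₀ w j • x j
      = ((1 + θ) / 2) • ∑ j ∈ s, a j • x j + ((1 - θ) / 2) • ∑ j ∈ s, (ε j * a j) • x j := by
    simp only [smul_sum, ← sum_add_distrib, smul_smul, ← add_smul]
    refine sum_congr rfl fun j _ => congrArg (· • x j) ?_
    rcases eq_or_ne j j₀ with rfl | h
    · simp only [Function.update_self, ε, ← hθw]; ring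
    · simp only [Function.update_of_ne h, ε, Pi.one_apply]; ring
  calc ‖∑ j ∈ s, Function.update a j₀ w j • x j‖
      ≤ (1 + θ) / 2 * ‖∑ j ∈ s, a j • x j‖ + (1 - θ) / 2 * ‖∑ j ∈ s, (ε j * a j) • x j‖ := by
        rw [hconv]
        refine (norm_add_le _ _).trans_eq ?_
        rw [norm_smul, norm_smul, Real.norm_of_nonneg (by linarith),
          Real.norm_of_nonneg (by linarith)]
    _ = ‖∑ j ∈ s, a j • x j‖ := by rw [hx ε hε]; ring

theorem norm_sum_le_of_abs_le (hx : IsOneUnconditional x) {a b : ℕ → ℝ} {s : Finset ℕ}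
    (hab : ∀ j ∈ s, |b j| ≤ |a j|) :
    ‖∑ j ∈ s, b j • x j‖ ≤ ‖∑ j ∈ s, a j • x j‖ := by
  suffices ∀ t ⊆ s, ‖∑ j ∈ s, t.piecewise b a j • x j‖ ≤ ‖∑ j ∈ s, a j • x j‖ by
    have hs := this s subset_rfl
    rwa [sum_congr rfl fun j hj => by rw [piecewise_eq_of_mem s b a hj]] at hs
  intro t hts
  induction t using Finset.induction_on with
  | empty => simp
  | insert j₀ t hj₀ ih =>
    rw [piecewise_insert]
    obtain ⟨hj₀s, hts⟩ := insert_subset_iff.1 hts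
    refine (hx.norm_sum_update_le _ s ?_).trans (ih hts)
    rw [piecewise_eq_of_notMem _ _ _ hj₀]
    exact hab j₀ hj₀s

theorem norm_sum_abs_smul (hx : IsOneUnconditional x) (a : ℕ → ℝ) (s : Finset ℕ) :
    ‖∑ j ∈ s, |a j| • x j‖ = ‖∑ j ∈ s, a j • x j‖ :=
  le_antisymm (hx.norm_sum_le_of_abs_le fun _ _ => (abs_abs _).le)
    (hx.norm_sum_le_of_abs_le fun _ _ => (abs_abs _).ge)

end IsOneUnconditional

def IsOneSpreading (x : ℕ → X) : Prop :=
  ∀ (φ : ℕ → ℕ), StrictMono φ →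
    ∀ (a : ℕ → ℝ) (s : Finset ℕ), ‖∑ j ∈ s, a j • x (φ j)‖ = ‖∑ j ∈ s, a j • x j‖

theorem IsOneSpreading.norm_sum_shift (hx : IsOneSpreading x) (a : ℕ → ℝ) (s : Finset ℕ)
    (i : ℕ) : ‖∑ j ∈ s, a j • x (j + i)‖ = ‖∑ j ∈ s, a j • x j‖ :=
  hx (· + i) (fun _ _ h => Nat.add_lt_add_right h i) a s

theorem IsOneSpreading.norm_sum_Ico (hx : IsOneSpreading x) (m K : ℕ) :
    ‖∑ t ∈ Ico m (m + K), x t‖ = ‖∑ t ∈ range K, x t‖ := by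
  simpa [sum_Ico_eq_sum_range, add_comm m] using hx.norm_sum_shift (fun _ => 1) (range K) m

theorem sum_mul_norm_sum_Ico_le (hu : IsOneUnconditional x) (hsp : IsOneSpreading x)
    {b : ℕ → ℝ} (hb : ∀ j, 0 ≤ b j) {s : Finset ℕ} {m : ℕ} (hs : s ⊆ range m) (N : ℕ) :
    (∑ j ∈ s, b j) * ‖∑ t ∈ Ico m N, x t‖ ≤ N * ‖∑ j ∈ s, b j • x j‖ := by
  set A := ∑ j ∈ s, b j
  have hA : 0 ≤ A := sum_nonneg fun j _ => hb j
  have hIco : Ico m N ⊆ range (N + m) := fun t ht => by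
    simp only [mem_Ico, mem_range] at ht ⊢; omega
  calc A * ‖∑ t ∈ Ico m N, x t‖
      = ‖∑ t ∈ range (N + m), (if t ∈ Ico m N then A else 0) • x t‖ := by
        simp only [ite_smul, zero_smul, ← sum_filter, filter_mem_eq_inter,
          inter_eq_right.2 hIco, ← smul_sum, norm_smul, Real.norm_of_nonneg hA]
    _ ≤ ‖∑ t ∈ range (N + m), shiftSumCoeff b s N t • x t‖ := by
        refine hu.norm_sum_le_of_abs_le fun t _ => ?_
        rw [abs_of_nonneg (shiftSumCoeff_nonneg hb s N t)]
        split_ifs with ht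
        · rw [abs_of_nonneg hA, shiftSumCoeff_of_mem_Ico b hs ht]
        · simpa using shiftSumCoeff_nonneg hb s N t
    _ = ‖∑ i ∈ range N, ∑ j ∈ s, b j • x (j + i)‖ := by rw [sum_range_sum_smul_shift x b hs]
    _ ≤ ∑ i ∈ range N, ‖∑ j ∈ s, b j • x (j + i)‖ := norm_sum_le _ _
    _ = N * ‖∑ j ∈ s, b j • x j‖ := by simp [hsp.norm_sum_shift]

theorem mul_sum_abs_le_norm_sum (hu : IsOneUnconditional x) (hsp : IsOneSpreading x) {c : ℝ}
    (hlow : ∀ n : ℕ, c * n ≤ ‖∑ j ∈ range n, x j‖) (a : ℕ → ℝ) (s : Finset ℕ) :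
    c * ∑ j ∈ s, |a j| ≤ ‖∑ j ∈ s, a j • x j‖ := by
  obtain ⟨m, hm⟩ : ∃ m, s ⊆ range m := ⟨s.sup id + 1, fun j hj =>
    mem_range.2 (Nat.lt_succ_of_le (le_sup (f := id) hj))⟩
  rw [← hu.norm_sum_abs_smul]
  refine le_of_forall_nat_mul_le_add_mul (m := m) fun K => ?_
  calc K * (c * ∑ j ∈ s, |a j|) = (∑ j ∈ s, |a j|) * (c * K) := by ring
    _ ≤ (∑ j ∈ s, |a j|) * ‖∑ t ∈ Ico m (m + K), x t‖ := by
        rw [hsp.norm_sum_Ico]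
        exact mul_le_mul_of_nonneg_left (hlow K) (sum_nonneg fun j _ => abs_nonneg _)
    _ ≤ (K + m) * ‖∑ j ∈ s, |a j| • x j‖ := by
        simpa [add_comm] using
          sum_mul_norm_sum_Ico_le hu hsp (fun j => abs_nonneg (a j)) hm (m + K)

end

theorem subsymmetric_lower_bound_equiv_l1_general
    {X : Type*} [NormedAddCommGroup X] [NormedSpace ℝ X]
    (x : ℕ → X)
    (huncond : ∀ (ε : ℕ → ℝ), (∀ j, |ε j| = 1) →
      ∀ (a : ℕ → ℝ) (s : Finset ℕ),
        ‖∑ j ∈ s, (ε j * a j) • x j‖ = ‖∑ j ∈ s, a j • x j‖)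
    (hsubsym : ∀ (φ : ℕ → ℕ), StrictMono φ →
      ∀ (a : ℕ → ℝ) (s : Finset ℕ),
        ‖∑ j ∈ s, a j • x (φ j)‖ = ‖∑ j ∈ s, a j • x j‖)
    (c : ℝ) (hc : 0 < c)
    (hlow : ∀ n : ℕ, c * n ≤ ‖∑ j ∈ Finset.range n, x j‖) :
    ∃ D : ℝ, ∀ (a : ℕ → ℝ) (s : Finset ℕ),
      ∑ j ∈ s, |a j| ≤ D * ‖∑ j ∈ s, a j • x j‖ :=
  ⟨c⁻¹, fun a s => (le_inv_mul_iff₀ hc).2 <|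
    mul_sum_abs_le_norm_sum huncond hsubsym hlow a s⟩

/-- If `(x j)` is a 1-subsymmetric basis (1-unconditional and isometrically equivalent to
all its subsequences) of a Banach space and `‖∑_{j<n} x j‖ ≥ c·n` for some `c > 0`,
then `(x j)` is equivalent to the unit vector basis of `ℓ₁`. -/
theorem subsymmetric_lower_bound_equiv_l1
    {X : Type*} [NormedAddCommGroup X] [NormedSpace ℝ X] [CompleteSpace X]
    (x : ℕ → X)
    (huncond : ∀ (ε : ℕ → ℝ), (∀ j, |ε j| = 1) →
      ∀ (a : ℕ → ℝ) (s : Finset ℕ),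
        ‖∑ j ∈ s, (ε j * a j) • x j‖ = ‖∑ j ∈ s, a j • x j‖)
    (hsubsym : ∀ (φ : ℕ → ℕ), StrictMono φ →
      ∀ (a : ℕ → ℝ) (s : Finset ℕ),
        ‖∑ j ∈ s, a j • x (φ j)‖ = ‖∑ j ∈ s, a j • x j‖)
    (c : ℝ) (hc : 0 < c)
    (hlow : ∀ n : ℕ, c * n ≤ ‖∑ j ∈ Finset.range n, x j‖) :
    ∃ D : ℝ, ∀ (a : ℕ → ℝ) (s : Finset ℕ),
      ∑ j ∈ s, |a j| ≤ D * ‖∑ j ∈ s, a j • x j‖ :=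
  subsymmetric_lower_bound_equiv_l1_general x huncond hsubsym c hc hlow
end

section
/- Let s = (s_n) be an increasing positive weight. If lim_n s_n/n = 0, then m(s) ⊆ c₀ and the inclusion is continuous; if inf_n s_n/n > 0, then m(s) = ℓ∞ with equivalent norms. -/
open Finset Filter

def marcSet (s : ℕ → ℝ) (f : ℕ → ℝ) : Set ℝ :=
  {r : ℝ | ∃ A : Finset ℕ, A.Nonempty ∧ r = (∑ j ∈ A, |f j|) / s A.card}

noncomputable def marcNorm (s : ℕ → ℝ) (f : ℕ → ℝ) : ℝ := sSup (marcSet s f)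

def MemMarc (s : ℕ → ℝ) (f : ℕ → ℝ) : Prop := BddAbove (marcSet s f)

open Topology

/-!
Testing the Marcinkiewicz norm on singletons gives `|f j| ≤ s 1 · ‖f‖_{m(s)}`, so `m(s) ⊆ ℓ∞`
continuously. If `|f j| ≥ ε` on an infinite set, testing on `n` of those indices gives
`n ε ≤ s n ‖f‖_{m(s)}`, which `s n / n → 0` forbids. If `s n ≥ c n`, then any `n` indices carry
mass at most `n ‖f‖_∞ ≤ s n ‖f‖_∞ / c`, so `‖f‖_{m(s)} ≤ ‖f‖_∞ / c`.
-/

section Marcinkiewicz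

variable {s f : ℕ → ℝ}

theorem abs_div_mem_marcSet (j : ℕ) : |f j| / s 1 ∈ marcSet s f :=
  ⟨{j}, singleton_nonempty j, by simp⟩

theorem sum_abs_div_le_marcNorm (hf : MemMarc s f) {A : Finset ℕ} (hA : A.Nonempty) :
    (∑ j ∈ A, |f j|) / s A.card ≤ marcNorm s f :=
  le_csSup hf ⟨A, hA, rfl⟩

theorem abs_le_mul_marcNorm (hs1 : 0 < s 1) (hf : MemMarc s f) (j : ℕ) :
    |f j| ≤ s 1 * marcNorm s f := by
  rw [← div_le_iff₀' hs1]
  exact le_csSup hf (abs_div_mem_marcSet j)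

theorem bddAbove_range_abs_of_memMarc (hs1 : 0 < s 1) (hf : MemMarc s f) :
    BddAbove (Set.range fun j => |f j|) :=
  ⟨s 1 * marcNorm s f, by rintro _ ⟨j, rfl⟩; exact abs_le_mul_marcNorm hs1 hf j⟩

theorem card_mul_le_mul_marcNorm (hpos : ∀ n, 1 ≤ n → 0 < s n) (hf : MemMarc s f)
    {A : Finset ℕ} (hA : A.Nonempty) {ε : ℝ} (hε : ∀ j ∈ A, ε ≤ |f j|) :
    A.card * ε ≤ s A.card * marcNorm s f := by
  have hsum : A.card • ε ≤ ∑ j ∈ A, |f j| := card_nsmul_le_sum A _ ε hε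
  have hnorm := sum_abs_div_le_marcNorm hf hA
  rw [div_le_iff₀' (hpos _ (card_pos.mpr hA))] at hnorm
  rw [nsmul_eq_mul] at hsum
  linarith

theorem tendsto_zero_of_memMarc (hpos : ∀ n, 1 ≤ n → 0 < s n)
    (hlim : Tendsto (fun n : ℕ => s n / n) atTop (𝓝 0)) (hf : MemMarc s f) :
    Tendsto f atTop (𝓝 0) := by
  rw [NormedAddGroup.tendsto_nhds_zero]
  intro ε hε
  rw [← Nat.cofinite_eq_atTop, eventually_cofinite]
  by_contra hinf
  have hsmall : ∀ᶠ n : ℕ in atTop, s n / n * marcNorm s f < ε := by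
    simpa using (hlim.mul_const (marcNorm s f)).eventually (gt_mem_nhds (by simpa using hε))
  obtain ⟨n, hn, hn1⟩ := (hsmall.and (eventually_ge_atTop 1)).exists
  obtain ⟨A, hAbig, hAcard⟩ := Set.Infinite.exists_subset_card_eq hinf n
  have hA : A.Nonempty := card_pos.mp (by omega)
  have hmass := card_mul_le_mul_marcNorm hpos hf hA fun j hj => by
    simpa using hAbig hj
  have hn0 : (0 : ℝ) < n := by exact_mod_cast hn1
  rw [hAcard] at hmass
  rw [div_mul_eq_mul_div, div_lt_iff₀ hn0] at hn
  linarith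

theorem sum_abs_div_le_of_abs_le {c B : ℝ} (hc : 0 < c) (hcs : ∀ n, 1 ≤ n → c ≤ s n / n)
    (hB : ∀ j, |f j| ≤ B) {A : Finset ℕ} (hA : A.Nonempty) :
    (∑ j ∈ A, |f j|) / s A.card ≤ B / c := by
  have hcard : (0 : ℝ) < A.card := by exact_mod_cast card_pos.mpr hA
  have hcs' : c * A.card ≤ s A.card := (le_div_iff₀ hcard).mp (hcs _ (card_pos.mpr hA))
  have hsum : ∑ j ∈ A, |f j| ≤ A.card * B := by
    simpa using sum_le_card_nsmul A _ B fun j _ => hB j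
  have hB0 : 0 ≤ B := (abs_nonneg _).trans (hB 0)
  rw [div_le_div_iff₀ ((mul_pos hc hcard).trans_le hcs') hc]
  calc (∑ j ∈ A, |f j|) * c ≤ A.card * B * c := by gcongr
    _ = B * (c * A.card) := by ring
    _ ≤ B * s A.card := by gcongr

theorem memMarc_of_abs_le {c B : ℝ} (hc : 0 < c) (hcs : ∀ n, 1 ≤ n → c ≤ s n / n)
    (hB : ∀ j, |f j| ≤ B) : MemMarc s f :=
  ⟨B / c, by rintro _ ⟨A, hA, rfl⟩; exact sum_abs_div_le_of_abs_le hc hcs hB hA⟩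

theorem marcNorm_le_of_abs_le {c B : ℝ} (hc : 0 < c) (hcs : ∀ n, 1 ≤ n → c ≤ s n / n)
    (hB : ∀ j, |f j| ≤ B) : marcNorm s f ≤ B / c :=
  csSup_le ⟨_, abs_div_mem_marcSet 0⟩ <| by
    rintro _ ⟨A, hA, rfl⟩
    exact sum_abs_div_le_of_abs_le hc hcs hB hA

end Marcinkiewicz

theorem marcinkiewicz_c0_or_linfty_general (s : ℕ → ℝ)
    (hpos : ∀ n, 1 ≤ n → 0 < s n) :
    -- if `s n / n → 0`, then `m(s) ⊆ c₀` and the inclusion is continuous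
    (Tendsto (fun n : ℕ => s n / n) atTop (nhds 0) →
      (∀ f, MemMarc s f → Tendsto f atTop (nhds 0)) ∧
      ∃ K : ℝ, 0 < K ∧ ∀ f, MemMarc s f → ∀ j, |f j| ≤ K * marcNorm s f) ∧
    -- if `inf_n s n / n > 0`, then `m(s) = ℓ∞` with equivalent norms
    ((∃ c : ℝ, 0 < c ∧ ∀ n, 1 ≤ n → c ≤ s n / n) →
      (∀ f, MemMarc s f ↔ BddAbove (Set.range fun j => |f j|)) ∧
      ∃ c C : ℝ, 0 < c ∧ ∀ f, MemMarc s f →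
        c * (⨆ j, |f j|) ≤ marcNorm s f ∧ marcNorm s f ≤ C * (⨆ j, |f j|)) := by
  have hs1 : 0 < s 1 := hpos 1 le_rfl
  constructor
  · intro hlim
    exact ⟨fun f => tendsto_zero_of_memMarc hpos hlim, s 1, hs1,
      fun f => abs_le_mul_marcNorm hs1⟩
  · rintro ⟨c, hc, hcs⟩
    refine ⟨fun f => ⟨bddAbove_range_abs_of_memMarc hs1, fun ⟨B, hB⟩ =>
      memMarc_of_abs_le hc hcs fun j => hB ⟨j, rfl⟩⟩, (s 1)⁻¹, c⁻¹, inv_pos.mpr hs1,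
      fun f hf => ⟨?_, ?_⟩⟩
    · rw [inv_mul_le_iff₀ hs1]
      exact ciSup_le (abs_le_mul_marcNorm hs1 hf)
    · rw [inv_mul_eq_div]
      exact marcNorm_le_of_abs_le hc hcs (le_ciSup (bddAbove_range_abs_of_memMarc hs1 hf))

/-- Let `s` be an increasing positive weight.  If `s n / n → 0` then `m(s) ⊆ c₀`
continuously; if `inf_n s n / n > 0` then `m(s) = ℓ∞` with equivalent norms. -/
theorem marcinkiewicz_c0_or_linfty (s : ℕ → ℝ)
    (hpos : ∀ n, 1 ≤ n → 0 < s n) (hmono : Monotone s) :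
    -- if `s n / n → 0`, then `m(s) ⊆ c₀` and the inclusion is continuous
    (Tendsto (fun n : ℕ => s n / n) atTop (nhds 0) →
      (∀ f, MemMarc s f → Tendsto f atTop (nhds 0)) ∧
      ∃ K : ℝ, 0 < K ∧ ∀ f, MemMarc s f → ∀ j, |f j| ≤ K * marcNorm s f) ∧
    -- if `inf_n s n / n > 0`, then `m(s) = ℓ∞` with equivalent norms
    ((∃ c : ℝ, 0 < c ∧ ∀ n, 1 ≤ n → c ≤ s n / n) →
      (∀ f, MemMarc s f ↔ BddAbove (Set.range fun j => |f j|)) ∧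
      ∃ c C : ℝ, 0 < c ∧ ∀ f, MemMarc s f →
        c * (⨆ j, |f j|) ≤ marcNorm s f ∧ marcNorm s f ≤ C * (⨆ j, |f j|)) :=
  marcinkiewicz_c0_or_linfty_general s hpos
end

section
/- Let s = (s_n) be an essentially increasing weight such that w = (s_n/n) is essentially decreasing. Then s has the lower regularity property (there exist C > 1 and an integer r ≥ 2 with s_{rn} ≥ C s_n for all n) if and only if w is regular (i.e., sup_n (1/(n w_n)) ∑_{j=1}^n w_j < ∞). -/
/-!
Write `w j = s j / j` and `W n = wSum s n = ∑_{j ≤ n} w j`; since `n * w n = s n`, regularity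
says `W n ≤ K * s n`.

If `s` has the lower regularity property, iterating it makes the constant exceed the
essential-increase constant `K₁` of `s`, say `C * s m ≤ s (R * m)` with `C > K₁`. Splitting
`W n` at `m = n / R`, the tail has at most `R * (m + 1)` terms, each at most `K₁ * s n / (m + 1)`,
while `s m ≤ (K₁ / C) * s n`; so `W n ≤ M * s n` follows by strong induction for a suitable `M`.

Conversely, since `w` is essentially decreasing, the `n` terms of `W (2 * n)` beyond `W n` add at
least `(c / 2) * s (2 * n) ≥ (c / (2 * K)) * W (2 * n)`, so `W` itself is lower regular with
ratio `2`. Iterating until the constant exceeds `K / c` and using `c * s n ≤ W n ≤ K * s n`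
transfers lower regularity back to `s`.
-/

open Finset

def LowerRegular (f : ℕ → ℝ) (C : ℝ) (r : ℕ) : Prop :=
  ∀ n, 1 ≤ n → C * f n ≤ f (r * n)

namespace LowerRegular

variable {f : ℕ → ℝ} {C : ℝ} {r : ℕ}

theorem pow (h : LowerRegular f C r) (hC : 0 ≤ C) (hr : 1 ≤ r) (k : ℕ) :
    LowerRegular f (C ^ k) (r ^ k) := by
  induction k with
  | zero => intro n _; simp
  | succ k ih =>
    intro n hn
    calc C ^ (k + 1) * f n = C * (C ^ k * f n) := by ring
      _ ≤ C * f (r ^ k * n) := mul_le_mul_of_nonneg_left (ih n hn) hC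
      _ ≤ f (r * (r ^ k * n)) := h _ (one_le_mul (Nat.one_le_pow _ _ hr) hn)
      _ = f (r ^ (k + 1) * n) := by rw [pow_succ', mul_assoc]

theorem exists_gt (h : LowerRegular f C r) (hC : 1 < C) (hr : 2 ≤ r) (B : ℝ) :
    ∃ C', B < C' ∧ ∃ R, 2 ≤ R ∧ LowerRegular f C' R := by
  obtain ⟨k, hk⟩ := pow_unbounded_of_one_lt B hC
  refine ⟨C ^ (k + 1), hk.trans (pow_lt_pow_right₀ hC k.lt_succ_self), r ^ (k + 1), ?_,
    h.pow (by linarith) (by omega) (k + 1)⟩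
  exact hr.trans (Nat.le_self_pow k.succ_ne_zero r)

end LowerRegular

noncomputable def wSum (s : ℕ → ℝ) (n : ℕ) : ℝ := ∑ j ∈ Icc 1 n, s j / j

section

variable {s : ℕ → ℝ}

theorem wSum_add_sum_Ioc {m n : ℕ} (hmn : m ≤ n) :
    wSum s m + ∑ j ∈ Ioc m n, s j / j = wSum s n := by
  have hIcc (k : ℕ) : Icc 1 k = Ioc 0 k := Icc_add_one_left_eq_Ioc 0 k
  simp only [wSum, hIcc]
  exact sum_Ioc_consecutive _ m.zero_le hmn

@[simp]
theorem wSum_zero : wSum s 0 = 0 := by simp [wSum]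

theorem wSum_one : wSum s 1 = s 1 := by simp [wSum]

theorem one_le_of_wSum_one_le {K : ℝ} (hs : 0 < s 1) (h : wSum s 1 ≤ K * s 1) : 1 ≤ K := by
  rw [wSum_one] at h
  nlinarith

theorem one_div_mul_wSum_le_iff {n : ℕ} (hs : 0 < s n) (hn : 1 ≤ n) (K : ℝ) :
    1 / ((n : ℝ) * (s n / n)) * wSum s n ≤ K ↔ wSum s n ≤ K * s n := by
  rw [mul_div_cancel₀ _ (by positivity), one_div_mul_eq_div, div_le_iff₀ hs]

end

section Forward

variable {s : ℕ → ℝ} {K : ℝ}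

theorem sum_Ioc_div_le (hpos : ∀ n, 1 ≤ n → 0 < s n)
    (hinc : ∀ m n, 1 ≤ m → m ≤ n → s m ≤ K * s n) {R m n : ℕ} (hmn : m < n)
    (hnR : n < R * (m + 1)) :
    ∑ j ∈ Ioc m n, s j / j ≤ K * R * s n := by
  have hn : 1 ≤ n := by omega
  have hKs : 0 ≤ K * s n := (hpos n hn).le.trans (hinc n n hn le_rfl)
  have hterm : ∀ j ∈ Ioc m n, s j / j ≤ K * s n / (m + 1) := by
    intro j hj
    obtain ⟨hmj, hjn⟩ := mem_Ioc.mp hj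
    exact div_le_div₀ hKs (hinc j n (by omega) hjn) (by positivity) (by exact_mod_cast hmj)
  have hcard : ((Ioc m n).card : ℝ) ≤ R * (m + 1) := by
    rw [Nat.card_Ioc]
    exact_mod_cast (by omega : n - m ≤ R * (m + 1))
  calc ∑ j ∈ Ioc m n, s j / j ≤ (Ioc m n).card • (K * s n / (m + 1)) :=
        sum_le_card_nsmul _ _ _ hterm
    _ ≤ (R * (m + 1)) * (K * s n / (m + 1)) := by
        rw [nsmul_eq_mul]
        exact mul_le_mul_of_nonneg_right hcard (by positivity)
    _ = K * R * s n := by field_simp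

theorem wSum_le_of_lowerRegular (hpos : ∀ n, 1 ≤ n → 0 < s n)
    (hinc : ∀ m n, 1 ≤ m → m ≤ n → s m ≤ K * s n) {C : ℝ} {R : ℕ} (hKC : K < C) (hR : 2 ≤ R)
    (hlrp : LowerRegular s C R) {n : ℕ} (hn : 1 ≤ n) :
    wSum s n ≤ K * R * C / (C - K) * s n := by
  have hK : 1 ≤ K := by
    have := hinc 1 1 le_rfl le_rfl
    nlinarith [hpos 1 le_rfl]
  have hC : 0 < C := by linarith
  set M := K * R * C / (C - K) with hM
  have hM0 : 0 ≤ M := div_nonneg (by positivity) (by linarith)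
  -- Splitting `wSum s n` at `n / R` gives `wSum s n ≤ (M * (K / C) + K * R) * s n`.
  have hfix : M * (K / C) + K * R = M := by
    rw [hM]
    field_simp [(by linarith : C - K ≠ 0)]
    ring
  induction n using Nat.strong_induction_on with
  | _ n ih =>
  set m := n / R
  have hmn : m < n := Nat.div_lt_self hn (by omega)
  have hnR : n < R * (m + 1) := Nat.lt_mul_div_succ n (by omega)
  have hhead : wSum s m ≤ M * (K / C) * s n := by
    rcases Nat.eq_zero_or_pos m with h0 | hm
    · rw [h0, wSum_zero]
      have := hpos n hn
      positivity
    · have hsm : C * s m ≤ K * s n :=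
        (hlrp _ hm).trans (hinc _ _ (one_le_mul (by omega) hm) (Nat.mul_div_le n R))
      calc wSum s m ≤ M * s m := ih _ hmn hm
        _ ≤ M * (K / C * s n) := by
            refine mul_le_mul_of_nonneg_left ?_ hM0
            rw [div_mul_eq_mul_div, le_div_iff₀ hC]
            linarith
        _ = M * (K / C) * s n := by ring
  calc wSum s n = wSum s m + ∑ j ∈ Ioc m n, s j / j :=
        (wSum_add_sum_Ioc hmn.le).symm
    _ ≤ M * (K / C) * s n + K * R * s n := add_le_add hhead (sum_Ioc_div_le hpos hinc hmn hnR)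
    _ = M * s n := by rw [← add_mul, hfix]

theorem exists_wSum_le_of_lowerRegular (hpos : ∀ n, 1 ≤ n → 0 < s n)
    (hinc : ∀ m n, 1 ≤ m → m ≤ n → s m ≤ K * s n) {C : ℝ} {r : ℕ} (hC : 1 < C) (hr : 2 ≤ r)
    (hlrp : LowerRegular s C r) :
    ∃ M, ∀ n, 1 ≤ n → wSum s n ≤ M * s n := by
  obtain ⟨C', hKC', R, hR, hlrp'⟩ := hlrp.exists_gt hC hr K
  exact ⟨_, fun n hn => wSum_le_of_lowerRegular hpos hinc hKC' hR hlrp' hn⟩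

end Forward

section Reverse

variable {s : ℕ → ℝ} {c K : ℝ}

theorem mul_le_sum_Ioc_div (hdec : ∀ m n, 1 ≤ m → m ≤ n → c * (s n / n) ≤ s m / m) (m n : ℕ) :
    ((n - m : ℕ) : ℝ) * (c * (s n / n)) ≤ ∑ j ∈ Ioc m n, s j / j := by
  have h := card_nsmul_le_sum (Ioc m n) (fun j => s j / j) _ fun j hj =>
    hdec j n (by have := (mem_Ioc.mp hj).1; omega) (mem_Ioc.mp hj).2
  rwa [Nat.card_Ioc, nsmul_eq_mul] at h

theorem mul_le_wSum (hdec : ∀ m n, 1 ≤ m → m ≤ n → c * (s n / n) ≤ s m / m) {n : ℕ}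
    (hn : 1 ≤ n) : c * s n ≤ wSum s n := by
  have hn0 : (n : ℝ) ≠ 0 := by positivity
  rw [← wSum_add_sum_Ioc n.zero_le, wSum_zero, zero_add]
  calc c * s n = ((n - 0 : ℕ) : ℝ) * (c * (s n / n)) := by rw [Nat.sub_zero]; field_simp
    _ ≤ _ := mul_le_sum_Ioc_div hdec 0 n

theorem exists_lowerRegular_wSum (hpos : ∀ n, 1 ≤ n → 0 < s n) (hc : 0 < c)
    (hdec : ∀ m n, 1 ≤ m → m ≤ n → c * (s n / n) ≤ s m / m)
    (hreg : ∀ n, 1 ≤ n → wSum s n ≤ K * s n) :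
    ∃ a, 1 < a ∧ LowerRegular (wSum s) a 2 := by
  have hK : 0 < K := one_pos.trans_le (one_le_of_wSum_one_le (hpos 1 le_rfl) (hreg 1 le_rfl))
  have hd : 0 < c / (2 * K) := by positivity
  refine ⟨1 + c / (2 * K), by linarith, fun n hn => ?_⟩
  have hsplit := wSum_add_sum_Ioc (s := s) (by omega : n ≤ 2 * n)
  have htail : c / 2 * s (2 * n) ≤ ∑ j ∈ Ioc n (2 * n), s j / j := by
    have h := mul_le_sum_Ioc_div hdec n (2 * n)
    have hn0 : (n : ℝ) ≠ 0 := by positivity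
    rw [show 2 * n - n = n by omega] at h
    push_cast at h
    convert h using 1
    field_simp
  have hupper : c / (2 * K) * wSum s (2 * n) ≤ c / 2 * s (2 * n) :=
    calc c / (2 * K) * wSum s (2 * n) ≤ c / (2 * K) * (K * s (2 * n)) :=
          mul_le_mul_of_nonneg_left (hreg _ (by omega)) hd.le
      _ = c / 2 * s (2 * n) := by field_simp
  have hmono : wSum s n ≤ wSum s (2 * n) := by
    have : 0 ≤ c / 2 * s (2 * n) := by have := hpos (2 * n) (by omega); positivity
    linarith
  calc (1 + c / (2 * K)) * wSum s n = wSum s n + c / (2 * K) * wSum s n := by ring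
    _ ≤ wSum s n + c / (2 * K) * wSum s (2 * n) := by gcongr
    _ ≤ wSum s (2 * n) := by linarith

theorem exists_lowerRegular_of_wSum_le (hpos : ∀ n, 1 ≤ n → 0 < s n) (hc : 0 < c)
    (hdec : ∀ m n, 1 ≤ m → m ≤ n → c * (s n / n) ≤ s m / m)
    (hreg : ∀ n, 1 ≤ n → wSum s n ≤ K * s n) :
    ∃ C, 1 < C ∧ ∃ r, 2 ≤ r ∧ LowerRegular s C r := by
  have hK : 0 < K := one_pos.trans_le (one_le_of_wSum_one_le (hpos 1 le_rfl) (hreg 1 le_rfl))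
  obtain ⟨a, ha, hW⟩ := exists_lowerRegular_wSum hpos hc hdec hreg
  obtain ⟨a', ha', R, hR, hWR⟩ := hW.exists_gt ha le_rfl (K / c)
  have ha'0 : 0 < a' := (div_pos hK hc).trans ha'
  refine ⟨a' * c / K, ?_, R, hR, fun n hn => ?_⟩
  · rw [one_lt_div hK]
    rwa [div_lt_iff₀ hc] at ha'
  · calc a' * c / K * s n = a' * (c * s n) / K := by ring
      _ ≤ a' * wSum s n / K := by gcongr; exact mul_le_wSum hdec hn
      _ ≤ wSum s (R * n) / K := by gcongr; exact hWR n hn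
      _ ≤ K * s (R * n) / K := by gcongr; exact hreg _ (one_le_mul (by omega) hn)
      _ = s (R * n) := by field_simp

end Reverse

/-- Let `s` be an essentially increasing weight such that `w n = s n / n` is essentially
decreasing.  Then `s` has the lower regularity property (`∃ C > 1` and an integer
`r ≥ 2` with `s (r n) ≥ C * s n` for all `n`) if and only if `w` is regular
(`sup_n (1/(n * w n)) ∑_{j=1}^n w j < ∞`).  Indices start at `1`. -/
theorem lrp_iff_regular (s : ℕ → ℝ) (hpos : ∀ n, 1 ≤ n → 0 < s n)
    (hessinc : ∃ K : ℝ, ∀ m n, 1 ≤ m → m ≤ n → s m / s n ≤ K)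
    (hessdec : ∃ c : ℝ, 0 < c ∧
      ∀ m n, 1 ≤ m → m ≤ n → c ≤ (s m / m) / (s n / n)) :
    (∃ C : ℝ, 1 < C ∧ ∃ r : ℕ, 2 ≤ r ∧ ∀ n, 1 ≤ n → C * s n ≤ s (r * n)) ↔
    (∃ K : ℝ, ∀ n : ℕ, 1 ≤ n →
      (1 / ((n : ℝ) * (s n / n))) * ∑ j ∈ Finset.Icc 1 n, s j / j ≤ K) := by
  obtain ⟨K₁, hK₁⟩ := hessinc
  obtain ⟨c, hc, hc'⟩ := hessdec
  have hinc : ∀ m n, 1 ≤ m → m ≤ n → s m ≤ K₁ * s n := fun m n hm hmn =>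
    (div_le_iff₀ (hpos n (hm.trans hmn))).mp (hK₁ m n hm hmn)
  have hdec : ∀ m n, 1 ≤ m → m ≤ n → c * (s n / n) ≤ s m / m := fun m n hm hmn =>
    (le_div_iff₀ (div_pos (hpos n (hm.trans hmn)) (by exact_mod_cast hm.trans hmn))).mp
      (hc' m n hm hmn)
  refine Iff.trans ?_ (exists_congr fun K => forall₂_congr fun n hn =>
    (one_div_mul_wSum_le_iff (hpos n hn) hn K).symm)
  exact ⟨fun ⟨C, hC, r, hr, hlrp⟩ => exists_wSum_le_of_lowerRegular hpos hinc hC hr hlrp,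
    fun ⟨K, hreg⟩ => exists_lowerRegular_of_wSum_le hpos hc hdec hreg⟩
end

section
/- Let s = (s_n) be an increasing weight whose discrete derivative is essentially decreasing, and suppose inf_n sup_k s_k/s_{kn} > 0. Then there exists a sequence of disjointly supported vectors in m(s) that is equivalent to the unit vector basis of ℓ₁. -/
open Finset

/-!
If `s` is bounded, the unit vectors already span `ℓ₁` isomorphically. Otherwise, choose block
lengths `K j` with `s (K j)` at least doubling and `s (K j) / K j` at least halving from one level
to the next, and let the `n`-th vector take the value `s (K j) / K j` on its own block of length
`K j` at every level `j`. A set of `R` coordinates meets one vector in levels with `K j ≤ R`, whose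
contributions `≤ s (K j)` sum geometrically to `≤ 2 s R`, and in levels with `K j > R`, whose
contributions `≤ R s (K j) / K j` sum geometrically to a multiple of `s R` because the essentially
decreasing derivative makes `s n / n` essentially decreasing. This is the upper `ℓ₁`-estimate.
For the lower one, use the blocks of level `|t|` of the vectors `n ∈ t`: the choice of `K |t|`
through `inf_n sup_k s k / s (k n) > 0` gives `s (|t| K) ≤ s K / δ`.
-/

noncomputable def discreteDeriv (s : ℕ → ℝ) (n : ℕ) : ℝ :=
  if n = 1 then s 1 else s n - s (n - 1)

section DiscreteDeriv

variable {s : ℕ → ℝ}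

theorem sum_Ioc_discreteDeriv {r : ℕ} (hr : 1 ≤ r) : ∑ l ∈ Ioc 0 r, discreteDeriv s l = s r := by
  induction r with
  | zero => omega
  | succ r ih =>
    rcases Nat.eq_zero_or_pos r with rfl | hr
    · simp [discreteDeriv]
    · rw [sum_Ioc_succ_top (Nat.zero_le r), ih hr, discreteDeriv, if_neg (by omega),
        Nat.add_sub_cancel]
      ring

theorem sub_eq_sum_discreteDeriv {r k : ℕ} (hr : 1 ≤ r) (hrk : r ≤ k) :
    s k - s r = ∑ i ∈ Ioc r k, discreteDeriv s i := by
  rw [← sum_Ioc_discreteDeriv (s := s) hr, ← sum_Ioc_discreteDeriv (s := s) (hr.trans hrk),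
    ← sum_Ioc_consecutive _ (Nat.zero_le r) hrk]
  ring

/-- `s k / k ≤ (1 + 1/c) * (s r / r)`: each increment beyond `r` is at most `1/c` times
the average increment up to `r`. -/
theorem quasiconcave_of_discreteDeriv {c : ℝ} (hc : 0 < c)
    (hw : ∀ m n, 1 ≤ m → m ≤ n → c * discreteDeriv s n ≤ discreteDeriv s m)
    {r k : ℕ} (hsr : 0 ≤ s r) (hr : 1 ≤ r) (hrk : r ≤ k) :
    c * (r * s k) ≤ (c + 1) * (k * s r) := by
  have hincrement : ∀ i, r ≤ i → c * discreteDeriv s i * r ≤ s r := by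
    intro i hi
    calc c * discreteDeriv s i * r = ∑ _l ∈ Ioc 0 r, c * discreteDeriv s i := by
          simp only [sum_const, Nat.card_Ioc, tsub_zero, nsmul_eq_mul]; ring
      _ ≤ ∑ l ∈ Ioc 0 r, discreteDeriv s l :=
          sum_le_sum fun l hl => hw l i (mem_Ioc.1 hl).1 ((mem_Ioc.1 hl).2.trans hi)
      _ = s r := sum_Ioc_discreteDeriv hr
  have htail : c * (s k - s r) * r ≤ (k - r) * s r := by
    calc c * (s k - s r) * r = ∑ i ∈ Ioc r k, c * discreteDeriv s i * r := by
          rw [sub_eq_sum_discreteDeriv hr hrk, mul_sum, sum_mul]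
      _ ≤ ∑ _i ∈ Ioc r k, s r := sum_le_sum fun i hi => hincrement i (mem_Ioc.1 hi).1.le
      _ = (k - r) * s r := by simp [Nat.cast_sub hrk]
  have hrk' : (r : ℝ) ≤ k := by exact_mod_cast hrk
  nlinarith [mul_nonneg (sub_nonneg.2 hrk') hsr, mul_nonneg hc.le hsr]

end DiscreteDeriv

section Geometric

variable {b : ℕ → ℝ}

theorem sum_range_add_two_mul_le_of_halving (h : ∀ i, 2 * b (i + 1) ≤ b i) (d : ℕ) :
    ∑ i ∈ range d, b i + 2 * b d ≤ 2 * b 0 := by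
  induction d with
  | zero => simp
  | succ d ih => rw [sum_range_succ]; linarith [h d]

theorem sum_range_succ_le_two_mul_of_doubling (h0 : 0 ≤ b 0) (h : ∀ i, 2 * b i ≤ b (i + 1))
    (d : ℕ) : ∑ i ∈ range (d + 1), b i ≤ 2 * b d := by
  induction d with
  | zero => simp only [zero_add, range_one, sum_singleton]; linarith
  | succ d ih => rw [sum_range_succ]; linarith [h d]

theorem sum_le_two_mul_of_doubling (hb : ∀ i, 0 ≤ b i) (h : ∀ i, 2 * b i ≤ b (i + 1))
    {S : Finset ℕ} {J : ℕ} (hS : ∀ j ∈ S, j ≤ J) : ∑ j ∈ S, b j ≤ 2 * b J :=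
  (sum_le_sum_of_subset_of_nonneg (fun j hj => mem_range_succ_iff.2 (hS j hj))
    fun i _ _ => hb i).trans (sum_range_succ_le_two_mul_of_doubling (hb 0) h J)

theorem sum_le_two_mul_of_halving (hb : ∀ i, 0 ≤ b i) (h : ∀ i, 2 * b (i + 1) ≤ b i)
    {S : Finset ℕ} {J : ℕ} (hS : ∀ j ∈ S, J ≤ j) : ∑ j ∈ S, b j ≤ 2 * b J := by
  obtain ⟨N, hN⟩ := S.exists_nat_subset_range
  calc ∑ j ∈ S, b j ≤ ∑ j ∈ Ico J N, b j :=
        sum_le_sum_of_subset_of_nonneg (fun j hj => mem_Ico.2 ⟨hS j hj, mem_range.1 (hN hj)⟩)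
          fun i _ _ => hb i
    _ = ∑ i ∈ range (N - J), b (J + i) := sum_Ico_eq_sum_range _ _ _
    _ ≤ 2 * b J := by
        have := sum_range_add_two_mul_le_of_halving (b := fun i => b (J + i))
          (fun i => h (J + i)) (N - J)
        simp only [add_zero] at this
        linarith [hb (J + (N - J))]

end Geometric

section Marcinkiewicz

variable {s : ℕ → ℝ}

theorem memMarc_and_marcNorm_le (hpos : ∀ n, 1 ≤ n → 0 < s n) {g : ℕ → ℝ} {B : ℝ}
    (hB : 0 ≤ B) (h : ∀ A : Finset ℕ, A.Nonempty → ∑ j ∈ A, |g j| ≤ B * s A.card) :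
    MemMarc s g ∧ marcNorm s g ≤ B := by
  have hub : ∀ r ∈ marcSet s g, r ≤ B := by
    rintro r ⟨A, hA, rfl⟩
    rw [div_le_iff₀ (hpos _ (card_pos.2 hA))]
    exact h A hA
  exact ⟨⟨B, hub⟩, Real.sSup_le hub hB⟩

theorem div_le_marcNorm {g : ℕ → ℝ} (hg : MemMarc s g) {A : Finset ℕ} (hA : A.Nonempty) :
    (∑ j ∈ A, |g j|) / s A.card ≤ marcNorm s g :=
  le_csSup hg ⟨A, hA, rfl⟩

theorem marcNorm_nonneg (hpos : ∀ n, 1 ≤ n → 0 < s n) {g : ℕ → ℝ} (hg : MemMarc s g) :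
    0 ≤ marcNorm s g :=
  (div_nonneg (sum_nonneg fun _ _ => abs_nonneg _)
    (hpos _ (card_pos.2 (singleton_nonempty 0))).le).trans
    (div_le_marcNorm hg (singleton_nonempty 0))

def EquivL1Basis (s : ℕ → ℝ) (f : ℕ → ℕ → ℝ) : Prop :=
  (∀ n, MemMarc s (f n)) ∧ ∃ c C : ℝ, 0 < c ∧ ∀ (a : ℕ → ℝ) (t : Finset ℕ),
    c * ∑ n ∈ t, |a n| ≤ marcNorm s (fun j => ∑ n ∈ t, a n * f n j) ∧
    marcNorm s (fun j => ∑ n ∈ t, a n * f n j) ≤ C * ∑ n ∈ t, |a n|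

theorem equivL1Basis_of_bounds (hpos : ∀ n, 1 ≤ n → 0 < s n) {f : ℕ → ℕ → ℝ} {c C : ℝ}
    (hc : 0 < c) (hC : 0 ≤ C)
    (hupper : ∀ n (A : Finset ℕ), A.Nonempty → ∑ x ∈ A, |f n x| ≤ C * s A.card)
    (hlower : ∀ (a : ℕ → ℝ) (t : Finset ℕ), t.Nonempty → ∃ A : Finset ℕ, A.Nonempty ∧
      c * (∑ n ∈ t, |a n|) * s A.card ≤ ∑ x ∈ A, |∑ n ∈ t, a n * f n x|) :
    EquivL1Basis s f := by
  have hsum (a : ℕ → ℝ) (t : Finset ℕ) : MemMarc s (fun j => ∑ n ∈ t, a n * f n j) ∧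
      marcNorm s (fun j => ∑ n ∈ t, a n * f n j) ≤ C * ∑ n ∈ t, |a n| := by
    refine memMarc_and_marcNorm_le hpos (mul_nonneg hC (sum_nonneg fun _ _ => abs_nonneg _))
      fun A hA => ?_
    calc ∑ x ∈ A, |∑ n ∈ t, a n * f n x| ≤ ∑ x ∈ A, ∑ n ∈ t, |a n| * |f n x| :=
          sum_le_sum fun x _ => (abs_sum_le_sum_abs _ _).trans_eq (by simp only [abs_mul])
      _ = ∑ n ∈ t, |a n| * ∑ x ∈ A, |f n x| := by rw [sum_comm]; simp only [mul_sum]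
      _ ≤ ∑ n ∈ t, |a n| * (C * s A.card) :=
          sum_le_sum fun n _ => mul_le_mul_of_nonneg_left (hupper n A hA) (abs_nonneg _)
      _ = C * (∑ n ∈ t, |a n|) * s A.card := by rw [← sum_mul]; ring
  refine ⟨fun n => (memMarc_and_marcNorm_le hpos hC (hupper n)).1, c, C, hc,
    fun a t => ⟨?_, (hsum a t).2⟩⟩
  rcases t.eq_empty_or_nonempty with rfl | ht
  · simpa using marcNorm_nonneg hpos (hsum a ∅).1
  · obtain ⟨A, hA, hle⟩ := hlower a t ht
    calc c * ∑ n ∈ t, |a n| ≤ (∑ x ∈ A, |∑ n ∈ t, a n * f n x|) / s A.card := by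
          rwa [le_div_iff₀ (hpos _ (card_pos.2 hA))]
      _ ≤ _ := div_le_marcNorm (hsum a t).1 hA

end Marcinkiewicz

def unitVec (n x : ℕ) : ℝ := if x = n then 1 else 0

theorem unitVec_disjoint : ∀ n n', n ≠ n' → ∀ j, unitVec n j = 0 ∨ unitVec n' j = 0 := by
  intro n n' hne j
  simp only [unitVec, ite_eq_right_iff, one_ne_zero, imp_false]
  omega

theorem equivL1Basis_unitVec {s : ℕ → ℝ} (hpos : ∀ n, 1 ≤ n → 0 < s n)
    (hinc : ∀ m n, 1 ≤ m → m ≤ n → s m ≤ s n) {M : ℝ} (hM : ∀ n, 1 ≤ n → s n ≤ M) :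
    EquivL1Basis s unitVec := by
  have hs1 := hpos 1 le_rfl
  have hM0 : 0 < M := hs1.trans_le (hM 1 le_rfl)
  refine equivL1Basis_of_bounds hpos (one_div_pos.2 hM0) (one_div_pos.2 hs1).le
    (fun n A hA => ?_) (fun a t ht => ⟨t, ht, ?_⟩)
  · calc ∑ x ∈ A, |unitVec n x| ≤ 1 := by
          simp only [unitVec, apply_ite abs, abs_one, abs_zero, sum_ite_eq']
          split_ifs <;> norm_num
      _ ≤ 1 / s 1 * s A.card := by
          rw [one_div_mul_eq_div, le_div_iff₀ hs1, one_mul]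
          exact hinc 1 _ le_rfl (card_pos.2 hA)
  · have hsum : ∑ x ∈ t, |∑ n ∈ t, a n * unitVec n x| = ∑ n ∈ t, |a n| :=
      sum_congr rfl fun x hx => by simp [unitVec, hx]
    rw [hsum]
    calc 1 / M * (∑ n ∈ t, |a n|) * s t.card ≤ 1 / M * (∑ n ∈ t, |a n|) * M :=
          mul_le_mul_of_nonneg_left (hM _ (card_pos.2 ht)) (by positivity)
      _ = ∑ n ∈ t, |a n| := by field_simp

section Blocks

variable {s : ℕ → ℝ} {K : ℕ → ℕ} {c : ℝ}

/-- Coordinates of `blockVec` are indexed by triples `(j, n, i)` (level, vector, position):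
vector `n` equals `s (K j) / K j` on the block `i < K j` of level `j`. -/
noncomputable def blockValue (s : ℕ → ℝ) (K : ℕ → ℕ) (n : ℕ) (p : ℕ × ℕ × ℕ) : ℝ :=
  if p.2.1 = n ∧ p.2.2 < K p.1 then s (K p.1) / K p.1 else 0

noncomputable def blockVec (s : ℕ → ℝ) (K : ℕ → ℕ) (n x : ℕ) : ℝ :=
  blockValue s K n ((Denumerable.eqv (ℕ × ℕ × ℕ)).symm x)

theorem blockVec_disjoint : ∀ n n', n ≠ n' → ∀ j, blockVec s K n j = 0 ∨ blockVec s K n' j = 0 := by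
  intro n n' hne j
  simp only [blockVec, blockValue, ite_eq_right_iff]
  by_cases h : ((Denumerable.eqv (ℕ × ℕ × ℕ)).symm j).2.1 = n
  · exact Or.inr fun h' => absurd (h.symm.trans h'.1) hne
  · exact Or.inl fun h' => absurd h'.1 h

theorem blockValue_nonneg (hpos : ∀ n, 1 ≤ n → 0 < s n) (hK : ∀ j, 1 ≤ K j) (n : ℕ)
    (p : ℕ × ℕ × ℕ) : 0 ≤ blockValue s K n p := by
  unfold blockValue
  split_ifs
  · exact div_nonneg (hpos _ (hK _)).le (Nat.cast_nonneg _)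
  · exact le_rfl

theorem exists_sum_abs_blockVec_ge (hpos : ∀ n, 1 ≤ n → 0 < s n) (hK : ∀ j, 1 ≤ K j) {δ : ℝ}
    (hlevel : ∀ j, 1 ≤ j → δ * s (j * K j) ≤ s (K j)) (a : ℕ → ℝ) {t : Finset ℕ}
    (ht : t.Nonempty) : ∃ A : Finset ℕ, A.Nonempty ∧
      δ * (∑ n ∈ t, |a n|) * s A.card ≤ ∑ x ∈ A, |∑ n ∈ t, a n * blockVec s K n x| := by
  set J := t.card
  set e := (Denumerable.eqv (ℕ × ℕ × ℕ)).symm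
  set P : Finset (ℕ × ℕ × ℕ) := {J} ×ˢ t ×ˢ range (K J)
  have hv : 0 ≤ s (K J) / K J := div_nonneg (hpos _ (hK J)).le (Nat.cast_nonneg _)
  have hblock : ∀ m ∈ t, ∀ i ∈ range (K J),
      |∑ n ∈ t, a n * blockValue s K n (J, m, i)| = |a m| * (s (K J) / K J) := by
    intro m hm i hi
    simp [blockValue, mem_range.1 hi, hm, abs_mul, abs_of_nonneg hv]
  have hsum : ∑ x ∈ P.map e.symm.toEmbedding, |∑ n ∈ t, a n * blockVec s K n x| =
      (∑ n ∈ t, |a n|) * s (K J) := by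
    simp only [sum_map, Equiv.coe_toEmbedding, blockVec, e, Equiv.apply_symm_apply, P,
      sum_product, sum_singleton]
    rw [sum_mul]
    refine sum_congr rfl fun m hm => ?_
    rw [sum_congr rfl (hblock m hm), sum_const, card_range, nsmul_eq_mul, mul_left_comm,
      mul_div_cancel₀ _ (by have := hK J; positivity)]
  have hP : P.Nonempty := (singleton_nonempty J).product (ht.product (nonempty_range_iff.2
    (Nat.one_le_iff_ne_zero.1 (hK J))))
  refine ⟨P.map e.symm.toEmbedding, hP.map, ?_⟩
  rw [hsum, card_map, card_product, card_product, card_singleton, card_range, one_mul,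
    mul_right_comm, mul_comm]
  exact mul_le_mul_of_nonneg_left (hlevel J (card_pos.2 ht)) (sum_nonneg fun _ _ => abs_nonneg _)

variable (hc : 0 < c) (hpos : ∀ n, 1 ≤ n → 0 < s n) (hinc : ∀ m n, 1 ≤ m → m ≤ n → s m ≤ s n)
  (hw : ∀ m n, 1 ≤ m → m ≤ n → c * discreteDeriv s n ≤ discreteDeriv s m)
  (hK : ∀ j, 1 ≤ K j)
  (hhalf : ∀ j, 2 * (s (K (j + 1)) / K (j + 1)) ≤ s (K j) / K j)
  (hdouble : ∀ j, 2 * s (K j) ≤ s (K (j + 1)))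
include hc hpos hinc hw hK hhalf hdouble

/-- Levels with `K j ≤ R` are controlled by the doubling of `s (K j)`, the others by the
halving of `s (K j) / K j` and quasi-concavity. -/
theorem sum_le_of_le_min {R : ℕ} (hR : 1 ≤ R) (S : Finset ℕ) {u : ℕ → ℝ}
    (hus : ∀ j, u j ≤ s (K j)) (huv : ∀ j, u j ≤ R * (s (K j) / K j)) :
    ∑ j ∈ S, u j ≤ (2 + 2 * ((c + 1) / c)) * s R := by
  have hsR := hpos R hR
  rw [← sum_filter_add_sum_filter_not S (fun j => K j ≤ R)]
  have hsmall : ∑ j ∈ S with K j ≤ R, u j ≤ 2 * s R := by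
    rcases (S.filter fun j => K j ≤ R).eq_empty_or_nonempty with h | h
    · rw [h, sum_empty]; positivity
    · set J := (S.filter fun j => K j ≤ R).max' h
      calc ∑ j ∈ S with K j ≤ R, u j ≤ ∑ j ∈ S with K j ≤ R, s (K j) := sum_le_sum fun j _ => hus j
        _ ≤ 2 * s (K J) := sum_le_two_mul_of_doubling (fun j => (hpos _ (hK j)).le) hdouble
            fun j hj => le_max' _ j hj
        _ ≤ 2 * s R := by
            linarith [hinc _ _ (hK J) (mem_filter.1 (max'_mem _ h)).2]
  have hlarge : ∑ j ∈ S with ¬K j ≤ R, u j ≤ 2 * ((c + 1) / c) * s R := by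
    rcases (S.filter fun j => ¬K j ≤ R).eq_empty_or_nonempty with h | h
    · rw [h, sum_empty]; positivity
    · set j₀ := (S.filter fun j => ¬K j ≤ R).min' h
      have hRK : R ≤ K j₀ := (not_le.1 (mem_filter.1 (min'_mem _ h)).2).le
      have hK₀ : (0 : ℝ) < K j₀ := by exact_mod_cast hK j₀
      calc ∑ j ∈ S with ¬K j ≤ R, u j ≤ R * ∑ j ∈ S with ¬K j ≤ R, s (K j) / K j := by
            rw [mul_sum]; exact sum_le_sum fun j _ => huv j
        _ ≤ R * (2 * (s (K j₀) / K j₀)) :=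
            mul_le_mul_of_nonneg_left (sum_le_two_mul_of_halving
              (fun j => div_nonneg (hpos _ (hK j)).le (Nat.cast_nonneg _)) hhalf
              fun j hj => min'_le _ j hj) (Nat.cast_nonneg _)
        _ = 2 * (c * (R * s (K j₀))) / (c * K j₀) := by field_simp
        _ ≤ 2 * ((c + 1) * (K j₀ * s R)) / (c * K j₀) := by
            gcongr ?_ / _
            exact mul_le_mul_of_nonneg_left (quasiconcave_of_discreteDeriv hc hw hsR.le hR hRK)
              zero_le_two
        _ = 2 * ((c + 1) / c) * s R := by field_simp
  linarith

theorem sum_blockValue_le (n : ℕ) {P : Finset (ℕ × ℕ × ℕ)} (hP : P.Nonempty) :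
    ∑ p ∈ P, blockValue s K n p ≤ (2 + 2 * ((c + 1) / c)) * s P.card := by
  classical
  set Q := P.filter fun p => p.2.1 = n ∧ p.2.2 < K p.1
  have hfiber (j : ℕ) : #{p ∈ Q | p.1 = j} ≤ K j ∧ #{p ∈ Q | p.1 = j} ≤ P.card := by
    refine ⟨?_, (card_le_card (filter_subset _ _)).trans (card_le_card (filter_subset _ _))⟩
    calc #{p ∈ Q | p.1 = j} ≤ #(range (K j)) := card_le_card_of_injOn (fun p => p.2.2)
          (fun p hp => by
            obtain ⟨hpQ, rfl⟩ := mem_filter.1 hp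
            exact mem_range.2 (mem_filter.1 hpQ).2.2)
          (fun p hp q hq hpq => by
            obtain ⟨hpQ, hpj⟩ := mem_filter.1 (mem_coe.1 hp)
            obtain ⟨hqQ, hqj⟩ := mem_filter.1 (mem_coe.1 hq)
            exact Prod.ext (hpj.trans hqj.symm) (Prod.ext
              ((mem_filter.1 hpQ).2.1.trans (mem_filter.1 hqQ).2.1.symm) hpq))
      _ = K j := card_range _
  have hv (j : ℕ) : 0 ≤ s (K j) / K j := div_nonneg (hpos _ (hK j)).le (Nat.cast_nonneg _)
  rw [show ∑ p ∈ P, blockValue s K n p = ∑ p ∈ Q, s (K p.1) / K p.1 from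
    (sum_filter _ _).symm, sum_comp (fun j => s (K j) / K j) Prod.fst]
  refine sum_le_of_le_min hc hpos hinc hw hK hhalf hdouble (card_pos.2 hP) _
    (fun j => ?_) (fun j => ?_)
  · calc (#{p ∈ Q | p.1 = j} • (s (K j) / K j)) ≤ K j * (s (K j) / K j) := by
          rw [nsmul_eq_mul]
          exact mul_le_mul_of_nonneg_right (by exact_mod_cast (hfiber j).1) (hv j)
      _ = s (K j) := mul_div_cancel₀ _ (by have := hK j; positivity)
  · rw [nsmul_eq_mul]; exact mul_le_mul_of_nonneg_right (by exact_mod_cast (hfiber j).2) (hv j)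

theorem sum_abs_blockVec_le (n : ℕ) {A : Finset ℕ} (hA : A.Nonempty) :
    ∑ x ∈ A, |blockVec s K n x| ≤ (2 + 2 * ((c + 1) / c)) * s A.card := by
  set e := (Denumerable.eqv (ℕ × ℕ × ℕ)).symm
  have h := sum_blockValue_le hc hpos hinc hw hK hhalf hdouble n (hA.map (f := e.toEmbedding))
  rw [sum_map, card_map, Equiv.coe_toEmbedding] at h
  simpa only [blockVec, abs_of_nonneg (blockValue_nonneg hpos hK _ _)] using h

theorem equivL1Basis_blockVec {δ : ℝ} (hδ : 0 < δ)
    (hlevel : ∀ j, 1 ≤ j → δ * s (j * K j) ≤ s (K j)) : EquivL1Basis s (blockVec s K) :=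
  equivL1Basis_of_bounds hpos hδ (by positivity)
    (fun n _ hA => sum_abs_blockVec_le hc hpos hinc hw hK hhalf hdouble n hA)
    (fun a _ ht => exists_sum_abs_blockVec_ge hpos hK hlevel a ht)

end Blocks

section BlockLengths

variable {s : ℕ → ℝ} {c δ : ℝ} (hc : 0 < c) (hpos : ∀ n, 1 ≤ n → 0 < s n)
  (hinc : ∀ m n, 1 ≤ m → m ≤ n → s m ≤ s n)
  (hw : ∀ m n, 1 ≤ m → m ≤ n → c * discreteDeriv s n ≤ discreteDeriv s m) (hδ : 0 < δ)
  (hS : ∀ n : ℕ, 1 ≤ n → ∃ k : ℕ, 1 ≤ k ∧ δ ≤ s k / s (k * n))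
  (hunbdd : ∀ M : ℝ, ∃ m, 1 ≤ m ∧ M < s m)
include hc hpos hinc hw hδ hS hunbdd

/-- The next block length is `m * k₀` with `m` large and `k₀` given by `hS` at `n * m`:
then `s (n * m * k₀) ≤ s k₀ / δ`, while quasi-concavity makes `s k₀ / k₀` bounded. -/
theorem exists_next_blockLength {n p : ℕ} (hn : 1 ≤ n) (hp : 1 ≤ p) :
    ∃ k, 1 ≤ k ∧ δ * s (n * k) ≤ s k ∧ 2 * (s k / k) ≤ s p / p ∧ 2 * s p ≤ s k := by
  obtain ⟨m₁, hm₁, hsm₁⟩ := hunbdd (2 * s p)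
  obtain ⟨m₂, hm₂⟩ := exists_nat_ge (2 * (c + 1) * p / (c * δ))
  set m := max m₁ m₂
  have hm : 1 ≤ m := hm₁.trans (le_max_left _ _)
  obtain ⟨k₀, hk₀, hδk₀⟩ := hS (n * m) (Nat.mul_pos hn hm)
  rw [le_div_iff₀ (hpos _ (Nat.mul_pos hk₀ (Nat.mul_pos hn hm)))] at hδk₀
  have hk : 1 ≤ m * k₀ := Nat.mul_pos hm hk₀
  have hsk : s (m * k₀) ≤ s (k₀ * (n * m)) := hinc _ _ hk (by nlinarith)
  refine ⟨m * k₀, hk, ?_, ?_, ?_⟩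
  · calc δ * s (n * (m * k₀)) = δ * s (k₀ * (n * m)) := by ring_nf
      _ ≤ s k₀ := hδk₀
      _ ≤ s (m * k₀) := hinc _ _ hk₀ (Nat.le_mul_of_pos_left k₀ hm)
  · have hs1p : s 1 ≤ s p := hinc 1 p le_rfl hp
    have hm' : 2 * (c + 1) * p ≤ c * δ * m := by
      rw [div_le_iff₀ (by positivity)] at hm₂
      have : (m₂ : ℝ) ≤ m := by exact_mod_cast le_max_right m₁ m₂
      nlinarith [mul_le_mul_of_nonneg_right this (mul_pos hc hδ).le]
    have hquasi := quasiconcave_of_discreteDeriv hc hw (hpos 1 le_rfl).le le_rfl hk₀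
    have hcδ : c * δ * (2 * p * s (m * k₀)) ≤ c * δ * (m * k₀ * s p) :=
      calc c * δ * (2 * p * s (m * k₀)) ≤ 2 * p * (c * s k₀) := by
            have := mul_le_mul_of_nonneg_left hsk hδ.le
            nlinarith [mul_pos hc (show (0 : ℝ) < p by exact_mod_cast hp)]
        _ ≤ 2 * p * ((c + 1) * (k₀ * s 1)) :=
            mul_le_mul_of_nonneg_left (by simpa using hquasi) (by positivity)
        _ = 2 * (c + 1) * p * (k₀ * s 1) := by ring
        _ ≤ c * δ * m * (k₀ * s p) :=
            mul_le_mul hm' (mul_le_mul_of_nonneg_left hs1p (Nat.cast_nonneg _))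
              (mul_nonneg (Nat.cast_nonneg _) (hpos 1 le_rfl).le) (by positivity)
        _ = c * δ * (m * k₀ * s p) := by ring
    rw [mul_div_assoc', div_le_div_iff₀ (by positivity) (by positivity)]
    push_cast
    nlinarith [le_of_mul_le_mul_left hcδ (by positivity)]
  · linarith [hinc m₁ (m * k₀) hm₁ ((le_max_left _ _).trans (Nat.le_mul_of_pos_right m hk₀))]

theorem exists_blockLengths : ∃ K : ℕ → ℕ, (∀ j, 1 ≤ K j) ∧
    (∀ j, 1 ≤ j → δ * s (j * K j) ≤ s (K j)) ∧
    (∀ j, 2 * (s (K (j + 1)) / K (j + 1)) ≤ s (K j) / K j) ∧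
    ∀ j, 2 * s (K j) ≤ s (K (j + 1)) := by
  choose! F hF using fun n p (hn : 1 ≤ n) (hp : 1 ≤ p) =>
    exists_next_blockLength hc hpos hinc hw hδ hS hunbdd hn hp
  let K : ℕ → ℕ := fun j => Nat.rec 1 (fun j k => F (j + 1) k) j
  have hK (j : ℕ) : 1 ≤ K j := by
    induction j with
    | zero => exact le_rfl
    | succ j ih => exact (hF (j + 1) (K j) (Nat.succ_pos j) ih).1
  refine ⟨K, hK, ?_, fun j => (hF _ _ (Nat.succ_pos j) (hK j)).2.2.1,
    fun j => (hF _ _ (Nat.succ_pos j) (hK j)).2.2.2⟩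
  rintro (_ | j) hj
  · omega
  · exact (hF (j + 1) (K j) (Nat.succ_pos j) (hK j)).2.1

end BlockLengths

/-- Let `s` be an increasing weight (indexed from `1`) whose discrete derivative
`w n = s n - s (n-1)` (with `w 1 = s 1`) is essentially decreasing, and suppose
`inf_n sup_k s k / s (k*n) > 0`.  Then `m(s)` contains a disjointly supported sequence
equivalent to the unit vector basis of `ℓ₁`. -/
theorem marcinkiewicz_contains_l1
    (s : ℕ → ℝ) (hpos : ∀ n, 1 ≤ n → 0 < s n)
    (hinc : ∀ m n, 1 ≤ m → m ≤ n → s m ≤ s n)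
    (hessdec : ∃ c : ℝ, 0 < c ∧ ∀ m n, 1 ≤ m → m ≤ n →
      c * (if n = 1 then s 1 else s n - s (n - 1)) ≤
        (if m = 1 then s 1 else s m - s (m - 1)))
    (hS : ∃ δ : ℝ, 0 < δ ∧ ∀ n : ℕ, 1 ≤ n → ∃ k : ℕ, 1 ≤ k ∧ δ ≤ s k / s (k * n)) :
    ∃ f : ℕ → ℕ → ℝ,
      (∀ n n', n ≠ n' → ∀ j, f n j = 0 ∨ f n' j = 0) ∧
      (∀ n, MemMarc s (f n)) ∧
      ∃ c C : ℝ, 0 < c ∧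
        ∀ (a : ℕ → ℝ) (t : Finset ℕ),
          c * ∑ n ∈ t, |a n| ≤ marcNorm s (fun j => ∑ n ∈ t, a n * f n j) ∧
          marcNorm s (fun j => ∑ n ∈ t, a n * f n j) ≤ C * ∑ n ∈ t, |a n| := by
  obtain ⟨c, hc, hw⟩ := hessdec
  obtain ⟨δ, hδ, hS⟩ := hS
  by_cases hbdd : ∃ M : ℝ, ∀ n, 1 ≤ n → s n ≤ M
  · obtain ⟨M, hM⟩ := hbdd
    exact ⟨unitVec, unitVec_disjoint, equivL1Basis_unitVec hpos hinc hM⟩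
  · push Not at hbdd
    obtain ⟨K, hK, hlevel, hhalf, hdouble⟩ := exists_blockLengths hc hpos hinc hw hδ hS hbdd
    exact ⟨blockVec s K, blockVec_disjoint,
      equivL1Basis_blockVec hc hpos hinc hw hK hhalf hdouble hδ hlevel⟩
end

section
/- Let M be a non-degenerate normalized convex Orlicz function. Then M satisfies the Δ₂-condition at zero (i.e., there is C with M(t) ≤ C·M(t/2) for all 0 ≤ t ≤ 1) if and only if β_M < ∞, where β_M = inf{ q ∈ [1,∞) : inf_{0 < b,t ≤ 1} t^{−q} M(bt)/M(b) > 0 } (with inf ∅ = ∞). -/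
/-- A non-degenerate normalized convex Orlicz function `M` satisfies the
`Δ₂`-condition at zero iff `β_M < ∞`, i.e. iff there is `q ∈ [1,∞)` with
`inf_{0 < b,t ≤ 1} t^{-q} M(bt)/M(b) > 0`. -/
theorem delta2_iff_beta_finite (M : ℝ → ℝ)
    (hconv : ConvexOn ℝ (Set.Ici (0 : ℝ)) M)
    (hmono : MonotoneOn M (Set.Ici (0 : ℝ)))
    (h0 : M 0 = 0) (h1 : M 1 = 1)
    (hnd : ∀ t : ℝ, 0 < t → 0 < M t) :
    (∃ C : ℝ, ∀ t : ℝ, 0 ≤ t → t ≤ 1 → M t ≤ C * M (t / 2)) ↔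
    (∃ q : ℝ, 1 ≤ q ∧ ∃ δ : ℝ, 0 < δ ∧ ∀ b t : ℝ,
      0 < b → b ≤ 1 → 0 < t → t ≤ 1 → δ ≤ t ^ (-q) * (M (b * t) / M b)) := by
  classical
  constructor
  · rintro ⟨C, hC⟩
    set C' : ℝ := max C 2 with hC'def
    have hC'2 : (2:ℝ) ≤ C' := le_max_right _ _
    have hC'pos : (0:ℝ) < C' := lt_of_lt_of_le (by norm_num) hC'2
    have hMnonneg : ∀ s : ℝ, 0 ≤ s → 0 ≤ M s := by
      intro s hs
      rcases eq_or_lt_of_le hs with h | h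
      · simp [← h, h0]
      · exact (hnd s h).le
    have hC' : ∀ t : ℝ, 0 ≤ t → t ≤ 1 → M t ≤ C' * M (t / 2) := by
      intro t ht ht1
      exact (hC t ht ht1).trans
        (mul_le_mul_of_nonneg_right (le_max_left _ _) (hMnonneg _ (by linarith)))
    -- key induction
    have key : ∀ k : ℕ, ∀ b : ℝ, 0 < b → b ≤ 1 →
        M b ≤ C' ^ k * M (b * (1/2) ^ k) := by
      intro k
      induction k with
      | zero => intro b hb hb1; simp
      | succ k ih =>
        intro b hb hb1
        have hs : 0 < b * (1/2:ℝ) ^ k := by positivity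
        have hs1 : b * (1/2:ℝ) ^ k ≤ 1 := by
          calc b * (1/2:ℝ) ^ k ≤ 1 * 1 := by
                apply mul_le_mul hb1 (pow_le_one₀ (by norm_num) (by norm_num)) (by positivity) zero_le_one
            _ = 1 := by ring
        have h2 := hC' _ hs.le hs1
        have : M (b * (1/2:ℝ) ^ k / 2) = M (b * (1/2:ℝ) ^ (k+1)) := by ring_nf
        calc M b ≤ C' ^ k * M (b * (1/2) ^ k) := ih b hb hb1
          _ ≤ C' ^ k * (C' * M (b * (1/2) ^ k / 2)) :=
              mul_le_mul_of_nonneg_left h2 (by positivity)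
          _ = C' ^ (k+1) * M (b * (1/2) ^ (k+1)) := by rw [this]; ring
    set q : ℝ := Real.logb 2 C' with hq
    have h2q : (2:ℝ) ^ q = C' := Real.rpow_logb (by norm_num) (by norm_num) hC'pos
    have hq1 : 1 ≤ q := by
      rw [hq, Real.le_logb_iff_rpow_le (by norm_num : (1:ℝ) < 2) hC'pos]
      simpa using hC'2
    refine ⟨q, hq1, 1 / C', by positivity, ?_⟩
    intro b t hb hb1 ht ht1
    -- find k with (1/2)^(k+1) < t ≤ (1/2)^k
    have hex : ∃ n : ℕ, (1/2:ℝ) ^ n < t := exists_pow_lt_of_lt_one ht (by norm_num)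
    set n := Nat.find hex with hn
    have hlt : (1/2:ℝ) ^ n < t := Nat.find_spec hex
    have hnpos : 0 < n := by
      rcases Nat.eq_zero_or_pos n with h | h
      · exfalso; rw [h] at hlt; simp at hlt; linarith
      · exact h
    obtain ⟨k, hk⟩ : ∃ k, n = k + 1 := ⟨n - 1, (Nat.succ_pred_eq_of_pos hnpos).symm⟩
    have hub : t ≤ (1/2:ℝ) ^ k := by
      by_contra h
      push_neg at h
      exact Nat.find_min hex (by omega : k < n) h
    have hlt' : (1/2:ℝ) ^ (k+1) < t := by rwa [hk] at hlt
    have hMb : 0 < M b := hnd b hb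
    have hMbt : 0 ≤ M (b * t) := hMnonneg _ (by positivity)
    -- t^q ≤ (C'^k)⁻¹
    have htq : t ^ q ≤ (C' ^ k)⁻¹ := by
      have h1' : t ^ q ≤ ((1/2:ℝ) ^ k) ^ q :=
        Real.rpow_le_rpow ht.le hub (by linarith)
      have h2' : ((1/2:ℝ) ^ k) ^ q = (C' ^ k)⁻¹ := by
        have e1 : ((1/2:ℝ) ^ k) = (2:ℝ) ^ (-(k:ℝ)) := by
          rw [Real.rpow_neg (by norm_num : (0:ℝ) ≤ 2), Real.rpow_natCast, one_div_pow, one_div]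
        rw [e1, ← Real.rpow_mul (by norm_num : (0:ℝ) ≤ 2), ← h2q,
          ← Real.rpow_natCast ((2:ℝ) ^ q) k, ← Real.rpow_mul (by norm_num : (0:ℝ) ≤ 2),
          ← Real.rpow_neg (by norm_num : (0:ℝ) ≤ 2)]
        congr 1
        ring
      linarith [h1', h2'.le]
    -- main chain
    have hMlow : M b / C' ^ (k+1) ≤ M (b * t) := by
      have h1' := key (k+1) b hb hb1
      have h2' : M (b * (1/2:ℝ) ^ (k+1)) ≤ M (b * t) := by
        apply hmono (Set.mem_Ici.mpr (by positivity : (0:ℝ) ≤ b * (1/2:ℝ)^(k+1)))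
          (Set.mem_Ici.mpr (by positivity : (0:ℝ) ≤ b * t))
        nlinarith
      have hpow : (0:ℝ) < C' ^ (k+1) := by positivity
      rw [div_le_iff₀ hpow]
      calc M b ≤ C' ^ (k+1) * M (b * (1/2)^(k+1)) := h1'
        _ ≤ C' ^ (k+1) * M (b * t) := mul_le_mul_of_nonneg_left h2' hpow.le
        _ = M (b * t) * C' ^ (k+1) := by ring
    have htqpos : 0 < t ^ q := Real.rpow_pos_of_pos ht q
    rw [Real.rpow_neg ht.le, ← one_div, div_mul_eq_mul_div, one_mul, div_div,
      le_div_iff₀ (by positivity)]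
    -- goal : 1 / C' * (t ^ q * M b) ≤ M (b * t)
    calc 1 / C' * (M b * t ^ q) ≤ 1 / C' * (M b * (C' ^ k)⁻¹) :=
          mul_le_mul_of_nonneg_left (mul_le_mul_of_nonneg_left htq hMb.le) (by positivity)
      _ = M b / C' ^ (k+1) := by
          rw [pow_succ, one_div, div_eq_mul_inv, mul_inv]
          ring
      _ ≤ M (b * t) := hMlow
  · rintro ⟨q, hq1, δ, hδ, h⟩
    refine ⟨2 ^ q / δ, ?_⟩
    intro t ht ht1
    rcases eq_or_lt_of_le ht with h' | h'
    · simp [← h', h0]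
    · have := h t (1/2) h' ht1 (by norm_num) (by norm_num)
      have hhalf : ((1/2:ℝ)) ^ (-q) = (2:ℝ) ^ q := by
        rw [Real.rpow_neg (by norm_num : (0:ℝ) ≤ 1/2), one_div,
          Real.inv_rpow (by norm_num : (0:ℝ) ≤ 2), inv_inv]
      rw [hhalf] at this
      have hMt : 0 < M t := hnd t h'
      have h2q : (0:ℝ) < (2:ℝ) ^ q := Real.rpow_pos_of_pos (by norm_num) q
      have ht2 : t * (1/2) = t / 2 := by ring
      rw [ht2] at this
      -- this : δ ≤ 2^q * (M (t/2) / M t)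
      have h4 := mul_le_mul_of_nonneg_right this hMt.le
      have e : (2:ℝ)^q * (M (t/2) / M t) * M t = 2^q * M (t/2) := by
        field_simp
      rw [e] at h4
      rw [div_mul_eq_mul_div, le_div_iff₀ hδ]
      linarith
end
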